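/- Consider the FP-FLA forward labeling algorithm applied to a fixed customer permutation π = (π_1, …, π_n), with fronts front_0, …, front_n as defined by the recursion. Then every label (d, q, b) ∈ front_i is the exact state of some feasible partial decoding of the prefix (π_1, …, π_i): there exists a node sequence starting at the depot δ, whose customer subsequence is exactly (π_1, …, π_i), satisfying the cargo constraint on every depot-to-depot segment and the battery constraint between consecutive recharge nodes, whose total distance is d, whose demand served since the last depot visit is q, and whose battery consumed since the last recharge is b. -/

import Mathlib

namespace FPSCP

/-- An FPSCP instance: depot, customers, charging stations, distances, demands,
battery consumption rate `h`, battery capacity `B` and cargo capacity `Q`. -/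
structure Instance (V : Type*) where
  dep : V
  Vc : Finset V
  Vf : Finset V
  dist : V → V → ℝ
  demand : V → ℝ
  h : ℝ
  B : ℝ
  Q : ℝ

variable {V : Type*} [DecidableEq V]

/-- A label of the FP-FLA algorithm: (total distance, cargo used since the most recent
depot visit, battery consumed since the most recent recharge). -/
abbrev Label : Type := ℝ × ℝ × ℝ

/-- Weight of a walk: the sum of `d` over its consecutive edges. -/
def walkWeight (d : V → V → ℝ) {G : SimpleGraph V} {x y : V} (p : G.Walk x y) : ℝ :=
  (p.darts.map fun e => d e.fst e.snd).sum

/-- The charging stations together with the depot. -/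
def stations (P : Instance V) : Finset V := insert P.dep P.Vf

/-- The charging graph `G` on `V_f ∪ {δ}`: `u` and `v` are adjacent iff `u ≠ v`,
both are recharge nodes, and `h * d u v ≤ B`. -/
def chargingGraph (P : Instance V) (hsymm : ∀ u v, P.dist u v = P.dist v u) :
    SimpleGraph V where
  Adj u v := u ≠ v ∧ u ∈ stations P ∧ v ∈ stations P ∧ P.h * P.dist u v ≤ P.B
  symm := by
    constructor
    rintro u v ⟨h1, h2, h3, h4⟩
    exact ⟨h1.symm, h3, h2, by rwa [hsymm v u]⟩
  loopless := by constructor; rintro u ⟨h1, -⟩; exact h1 rfl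

/-- `F x y`: shortest-walk distance between `x` and `y` in the charging graph. -/
noncomputable def F (P : Instance V) (hsymm : ∀ u v, P.dist u v = P.dist v u)
    (x y : V) : ℝ :=
  sInf {r : ℝ | ∃ p : (chargingGraph P hsymm).Walk x y, r = walkWeight P.dist p}

/-- State update when traversing the leg from `u` to `v`: distance accumulates, cargo
resets at the depot and otherwise accumulates the demand of `v`, and the battery
consumption resets upon departure from a recharge node. -/
def step (P : Instance V) (L : Label) (u v : V) : Label :=
  (L.1 + P.dist u v,
    if v = P.dep then 0 else L.2.1 + P.demand v,
    (if u = P.dep ∨ u ∈ P.Vf then 0 else L.2.2) + P.h * P.dist u v)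

/-- The state reached after traversing a node sequence, starting from state `L` at `u`. -/
def runState (P : Instance V) : Label → V → List V → Label
  | L, _, [] => L
  | L, u, v :: rest => runState P (step P L u v) v rest

/-- Feasibility of a node sequence: at every arrival the cargo used since the most recent
depot visit is at most `Q` and the battery consumed since the most recent recharge is at
most `B`. -/
def runOK (P : Instance V) : Label → V → List V → Prop
  | _, _, [] => True
  | L, u, v :: rest =>
      (step P L u v).2.1 ≤ P.Q ∧ (step P L u v).2.2 ≤ P.B ∧ runOK P (step P L u v) v rest

/-- A feasible partial decoding of the prefix `pre` of the customer permutation: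
`rest` is the node sequence following the initial depot; all its nodes are customers,
charging stations or the depot; its customer subsequence is exactly `pre`; it ends at the
last customer of `pre`; and the cargo and battery constraints hold throughout. -/
def PartialDecoding (P : Instance V) (pre rest : List V) : Prop :=
  (∀ v ∈ rest, v ∈ P.Vc ∨ v ∈ P.Vf ∨ v = P.dep) ∧
  rest.filter (fun v => decide (v ∈ P.Vc)) = pre ∧
  rest.getLast? = pre.getLast? ∧
  runOK P (0, 0, 0) P.dep rest

/-- A feasible (complete) decoding of the customer permutation `π`: `rest` is the node
sequence following the initial depot; it ends at the depot; its customer subsequence is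
exactly `π`; and the cargo and battery constraints hold throughout. -/
def FullDecoding (P : Instance V) (π rest : List V) : Prop :=
  (∀ v ∈ rest, v ∈ P.Vc ∨ v ∈ P.Vf ∨ v = P.dep) ∧
  rest.filter (fun v => decide (v ∈ P.Vc)) = π ∧
  rest.getLast? = some P.dep ∧
  runOK P (0, 0, 0) P.dep rest

/-- Direct extension of a label from `prev` to `next`. -/
def directExt (P : Instance V) (prev next : V) (L : Label) : Label :=
  (L.1 + P.dist prev next, L.2.1 + P.demand next, L.2.2 + P.h * P.dist prev next)

/-- Charging-detour extension of a label from `prev` to `next`, entering the charging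
network at `fIn` and leaving it at `fOut`. -/
noncomputable def chargeExt (P : Instance V) (hsymm : ∀ u v, P.dist u v = P.dist v u)
    (prev next fIn fOut : V) (L : Label) : Label :=
  (L.1 + P.dist prev fIn + F P hsymm fIn fOut + P.dist fOut next,
    L.2.1 + P.demand next, P.h * P.dist fOut next)

/-- Depot-detour extension of a label from `prev` to `next`, entering the charging
network at `fIn`, visiting the depot, and leaving the network at `fOut`. -/
noncomputable def depotExt (P : Instance V) (hsymm : ∀ u v, P.dist u v = P.dist v u)
    (prev next fIn fOut : V) (L : Label) : Label :=
  (L.1 + P.dist prev fIn + F P hsymm fIn P.dep + F P hsymm P.dep fOut + P.dist fOut next,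
    P.demand next, P.h * P.dist fOut next)

/-- The set of feasible candidate labels generated from a label `L` at `prev` when moving
to `next`: the direct extension and, for every pair `(fIn, fOut)` of recharge nodes, the
charging-detour and depot-detour extensions, subject to the feasibility conditions
(cargo ≤ Q, battery ≤ B, detour reachability `b + h·d(prev, fIn) ≤ B`, and existence of
the corresponding battery-feasible station sequences). -/
def candidates (P : Instance V) (hsymm : ∀ u v, P.dist u v = P.dist v u)
    (prev next : V) (L : Label) : Set Label :=
  {L' | (L' = directExt P prev next L ∧ L'.2.1 ≤ P.Q ∧ L'.2.2 ≤ P.B) ∨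
    (∃ fIn fOut, fIn ∈ stations P ∧ fOut ∈ stations P ∧
      L.2.2 + P.h * P.dist prev fIn ≤ P.B ∧
      ((L' = chargeExt P hsymm prev next fIn fOut L ∧
          Nonempty ((chargingGraph P hsymm).Walk fIn fOut) ∧
          L'.2.1 ≤ P.Q ∧ L'.2.2 ≤ P.B) ∨
       (L' = depotExt P hsymm prev next fIn fOut L ∧
          Nonempty ((chargingGraph P hsymm).Walk fIn P.dep) ∧
          Nonempty ((chargingGraph P hsymm).Walk P.dep fOut) ∧
          L'.2.1 ≤ P.Q ∧ L'.2.2 ≤ P.B)))}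

/-- Removing componentwise-dominated labels: keep the componentwise-minimal elements. -/
def minimalOnly (S : Set Label) : Set Label :=
  {x ∈ S | ∀ y ∈ S, y ≤ x → x ≤ y}

/-- One step of the FP-FLA front recursion. -/
noncomputable def nextFront (P : Instance V) (hsymm : ∀ u v, P.dist u v = P.dist v u)
    (prev next : V) (Fr : Set Label) : Set Label :=
  minimalOnly {L' | ∃ L ∈ Fr, L' ∈ candidates P hsymm prev next L}

/-- The FP-FLA front obtained from the front `Fr` at node `prev` after processing the
remaining node list. -/
noncomputable def fronts (P : Instance V) (hsymm : ∀ u v, P.dist u v = P.dist v u) :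
    V → List V → Set Label → Set Label
  | _, [], Fr => Fr
  | prev, c :: rest, Fr => fronts P hsymm c rest (nextFront P hsymm prev c Fr)

/-- The initial front, containing the single label `(0, 0, 0)`. -/
def initFront : Set Label := {((0 : ℝ), (0 : ℝ), (0 : ℝ))}


/-! ### Auxiliary lemmas -/

section Aux

open SimpleGraph

variable {P : Instance V}

lemma runState_cons (P : Instance V) (L : Label) (u v : V) (l : List V) :
    runState P L u (v :: l) = runState P (step P L u v) v l := rfl

lemma runOK_cons (P : Instance V) (L : Label) (u v : V) (l : List V) :
    runOK P L u (v :: l) ↔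
      ((step P L u v).2.1 ≤ P.Q ∧ (step P L u v).2.2 ≤ P.B ∧
        runOK P (step P L u v) v l) := Iff.rfl

lemma runState_append (P : Instance V) (l1 l2 : List V) :
    ∀ (L : Label) (u : V),
      runState P L u (l1 ++ l2) = runState P (runState P L u l1) (l1.getLastD u) l2 := by
  induction l1 with
  | nil => intro L u; rfl
  | cons v t ih =>
      intro L u
      rw [List.cons_append, runState_cons, runState_cons, List.getLastD_cons]
      exact ih _ v

lemma runOK_append (P : Instance V) (l1 l2 : List V) :
    ∀ (L : Label) (u : V),
      runOK P L u (l1 ++ l2) ↔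
        runOK P L u l1 ∧ runOK P (runState P L u l1) (l1.getLastD u) l2 := by
  induction l1 with
  | nil =>
      intro L u
      show runOK P L u l2 ↔ True ∧ runOK P L u l2
      tauto
  | cons v t ih =>
      intro L u
      rw [List.cons_append, runOK_cons, runOK_cons, runState_cons, List.getLastD_cons,
        ih (step P L u v) v]
      tauto

lemma walkWeight_nil (d : V → V → ℝ) {G : SimpleGraph V} (x : V) :
    walkWeight d (Walk.nil : G.Walk x x) = 0 := by
  simp [walkWeight]

lemma walkWeight_cons (d : V → V → ℝ) {G : SimpleGraph V} {x y z : V}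
    (h : G.Adj x y) (p : G.Walk y z) :
    walkWeight d (Walk.cons h p) = d x y + walkWeight d p := by
  simp [walkWeight, Walk.darts_cons]

lemma walkWeight_append (d : V → V → ℝ) {G : SimpleGraph V} {x y z : V}
    (p : G.Walk x y) (q : G.Walk y z) :
    walkWeight d (p.append q) = walkWeight d p + walkWeight d q := by
  simp [walkWeight, Walk.darts_append]

lemma walkWeight_nonneg (d : V → V → ℝ) (hd : ∀ u v, 0 ≤ d u v)
    {G : SimpleGraph V} {x y : V} (p : G.Walk x y) :
    0 ≤ walkWeight d p := by
  apply List.sum_nonneg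
  intro r hr
  simp only [List.mem_map] at hr
  obtain ⟨e, -, rfl⟩ := hr
  exact hd _ _

lemma walkWeight_bypass_le (d : V → V → ℝ) (hd : ∀ u v, 0 ≤ d u v)
    {G : SimpleGraph V} {x y : V} (p : G.Walk x y) :
    walkWeight d p.bypass ≤ walkWeight d p := by
  induction p with
  | nil => rw [Walk.bypass]
  | @cons u v w h' p' ih =>
      rw [Walk.bypass]
      split_ifs with hs
      · have h1 : walkWeight d (p'.bypass.takeUntil u hs)
            + walkWeight d (p'.bypass.dropUntil u hs) = walkWeight d p'.bypass := by
          rw [← walkWeight_append, Walk.take_spec]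
        have h2 := walkWeight_nonneg d hd (p'.bypass.takeUntil u hs)
        rw [walkWeight_cons]
        have h3 := hd u v
        linarith
      · rw [walkWeight_cons, walkWeight_cons]
        have := hd u v
        linarith

lemma F_le (P : Instance V) (hsymm : ∀ u v, P.dist u v = P.dist v u)
    (hnn : ∀ u v, 0 ≤ P.dist u v) {x y : V}
    (p : (chargingGraph P hsymm).Walk x y) :
    F P hsymm x y ≤ walkWeight P.dist p := by
  apply csInf_le
  · exact ⟨0, by rintro r ⟨q, rfl⟩; exact walkWeight_nonneg _ hnn q⟩
  · exact ⟨p, rfl⟩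

lemma F_attained [Fintype V] (P : Instance V)
    (hsymm : ∀ u v, P.dist u v = P.dist v u) (hnn : ∀ u v, 0 ≤ P.dist u v)
    {x y : V} (hne : Nonempty ((chargingGraph P hsymm).Walk x y)) :
    ∃ p : (chargingGraph P hsymm).Walk x y, walkWeight P.dist p = F P hsymm x y := by
  classical
  set G := chargingGraph P hsymm with hG
  haveI : DecidableRel G.Adj := Classical.decRel _
  haveI : Nonempty {p : G.Walk x y // p.length < Fintype.card V} :=
    ⟨⟨hne.some.bypass, (hne.some.bypass_isPath).length_lt⟩⟩
  obtain ⟨p₀, hp₀⟩ := Finite.exists_min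
    (fun p : {p : G.Walk x y // p.length < Fintype.card V} => walkWeight P.dist p.1)
  have hmin : ∀ q : G.Walk x y, walkWeight P.dist p₀.1 ≤ walkWeight P.dist q := by
    intro q
    have h1 := hp₀ ⟨q.bypass, q.bypass_isPath.length_lt⟩
    exact h1.trans (walkWeight_bypass_le _ hnn q)
  refine ⟨p₀.1, le_antisymm ?_ (F_le P hsymm hnn p₀.1)⟩
  have hnonempty : {r : ℝ | ∃ p : G.Walk x y, r = walkWeight P.dist p}.Nonempty :=
    ⟨walkWeight P.dist p₀.1, p₀.1, rfl⟩
  apply le_csInf hnonempty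
  rintro r ⟨q, rfl⟩
  exact hmin q

lemma mem_stations_iff {P : Instance V} {v : V} :
    v ∈ stations P ↔ v = P.dep ∨ v ∈ P.Vf := by
  simp [stations]

/-- Running along the interior of a walk in the charging graph followed by the customer
`c`: the exact resulting state, plus feasibility. -/
lemma walk_run (P : Instance V) (hsymm : ∀ u v, P.dist u v = P.dist v u)
    (hdemDep : P.demand P.dep = 0) (hdemVf : ∀ v ∈ P.Vf, P.demand v = 0)
    (hQ : 0 < P.Q) (c : V) (hc : c ≠ P.dep)
    {x y : V} (p : (chargingGraph P hsymm).Walk x y) (hx : x ∈ stations P) :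
    (∀ v ∈ p.support, v ∈ stations P) ∧
    ∀ (D q b : ℝ), 0 ≤ q → q ≤ P.Q →
      runState P (D, q, b) x (p.support.tail ++ [c]) =
        (D + walkWeight P.dist p + P.dist y c,
          (if P.dep ∈ p.support.tail then 0 else q) + P.demand c,
          P.h * P.dist y c) ∧
      (P.demand c ≤ P.Q → (P.dep ∉ p.support.tail → q + P.demand c ≤ P.Q) →
        P.h * P.dist y c ≤ P.B →
        runOK P (D, q, b) x (p.support.tail ++ [c])) := by
  revert hx
  induction p with
  | @nil x =>
      intro hx
      refine ⟨by simpa using hx, ?_⟩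
      intro D q b hq0 hqQ
      have hx' : x = P.dep ∨ x ∈ P.Vf := mem_stations_iff.1 hx
      have hresetx : (if x = P.dep ∨ x ∈ P.Vf then (0:ℝ) else b) = 0 := if_pos hx'
      have hstep : step P (D, q, b) x c =
          (D + P.dist x c, q + P.demand c, P.h * P.dist x c) := by
        simp only [step, if_neg hc, hresetx, zero_add]
      constructor
      · simp only [Walk.support_nil, List.tail_cons, List.nil_append, runState, hstep,
          walkWeight_nil, add_zero]
        try simp
      · intro h1 h2 h3
        simp only [Walk.support_nil, List.tail_cons, List.nil_append]
        rw [runOK_cons, hstep]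
        exact ⟨h2 (by simp), h3, trivial⟩
  | @cons u w y h' p' ih =>
      intro hx
      have hw : w ∈ stations P := h'.2.2.1
      obtain ⟨hsupp', ih'⟩ := ih hw
      constructor
      · intro v hv
        rw [Walk.support_cons] at hv
        rcases List.mem_cons.1 hv with rfl | hv
        · exact hx
        · exact hsupp' v hv
      intro D q b hq0 hqQ
      have hxd : u = P.dep ∨ u ∈ P.Vf := mem_stations_iff.1 hx
      have hdemw : P.demand w = 0 := by
        rcases mem_stations_iff.1 hw with h | h
        · rw [h, hdemDep]
        · exact hdemVf _ h
      have hresetx : (if u = P.dep ∨ u ∈ P.Vf then (0:ℝ) else b) = 0 := if_pos hxd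
      have hstep : step P (D, q, b) u w =
          (D + P.dist u w, if w = P.dep then 0 else q, P.h * P.dist u w) := by
        simp only [step, hdemw, add_zero, hresetx, zero_add]
      have hlist : (Walk.cons h' p').support.tail ++ [c]
          = w :: (p'.support.tail ++ [c]) := by
        rw [Walk.support_cons, List.tail_cons]
        conv_lhs => rw [p'.support_eq_cons]
        rw [List.cons_append]
      have hq1Q : (if w = P.dep then (0:ℝ) else q) ≤ P.Q := by
        split_ifs
        · exact hQ.le
        · exact hqQ
      have hq10 : (0:ℝ) ≤ if w = P.dep then 0 else q := by
        split_ifs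
        · exact le_refl 0
        · exact hq0
      obtain ⟨ihState, ihOK⟩ := ih' (D + P.dist u w) (if w = P.dep then 0 else q)
        (P.h * P.dist u w) hq10 hq1Q
      have hmemiff : P.dep ∈ (Walk.cons h' p').support.tail
          ↔ (w = P.dep ∨ P.dep ∈ p'.support.tail) := by
        rw [Walk.support_cons, List.tail_cons]
        conv_lhs => rw [p'.support_eq_cons]
        exact List.mem_cons.trans (or_congr_left eq_comm)
      have hmem2 : P.dep ∈ p'.support ↔ (w = P.dep ∨ P.dep ∈ p'.support.tail) := by
        conv_lhs => rw [p'.support_eq_cons]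
        exact List.mem_cons.trans (or_congr_left eq_comm)
      have hifeq : (if P.dep ∈ p'.support.tail then (0:ℝ)
            else if w = P.dep then 0 else q)
          = (if P.dep ∈ (Walk.cons h' p').support.tail then 0 else q) := by
        by_cases h1 : w = P.dep <;> by_cases h2 : P.dep ∈ p'.support.tail <;>
          simp [hmemiff, hmem2, h1, h2]
      constructor
      · rw [hlist, runState_cons, hstep, ihState, walkWeight_cons, hifeq]
        refine Prod.ext ?_ (Prod.ext ?_ ?_) <;> simp <;> ring
      · intro h1 h2 h3
        rw [hlist, runOK_cons, hstep]
        refine ⟨hq1Q, h'.2.2.2, ?_⟩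
        apply ihOK h1 _ h3
        intro hnmem
        by_cases h4 : w = P.dep
        · rw [if_pos h4, zero_add]; exact h1
        · rw [if_neg h4]
          apply h2
          rw [hmemiff]
          push_neg
          exact ⟨fun hh => h4 hh, hnmem⟩

lemma getLastD_concat (c : V) (l : List V) (d : V) : (l ++ [c]).getLastD d = c := by
  rw [List.getLastD_eq_getLast?, List.getLast?_concat]
  rfl

lemma extend_decoding (P : Instance V) (pre0 rest : List V)
    (hPD : PartialDecoding P pre0 rest) (c : V) (hc : c ∈ P.Vc)
    (hdepC : P.dep ∉ P.Vc) (hdisj : Disjoint P.Vc P.Vf)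
    (mid : List V) (hmid : ∀ v ∈ mid, v ∈ P.Vf ∨ v = P.dep)
    (hOK : runOK P (runState P (0,0,0) P.dep rest) (rest.getLastD P.dep) (mid ++ [c])) :
    PartialDecoding P (pre0 ++ [c]) (rest ++ (mid ++ [c])) := by
  obtain ⟨hmem, hfilt, hlast, hrun⟩ := hPD
  refine ⟨?_, ?_, ?_, ?_⟩
  · intro v hv
    rcases List.mem_append.1 hv with hv | hv
    · exact hmem v hv
    · rcases List.mem_append.1 hv with hv | hv
      · rcases hmid v hv with h | h
        · exact Or.inr (Or.inl h)
        · exact Or.inr (Or.inr h)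
      · rw [List.mem_singleton] at hv
        subst hv
        exact Or.inl hc
  · rw [List.filter_append, List.filter_append, hfilt]
    have h1 : mid.filter (fun v => decide (v ∈ P.Vc)) = [] := by
      rw [List.filter_eq_nil_iff]
      intro a ha
      rcases hmid a ha with h | h
      · simp [Finset.disjoint_right.1 hdisj h]
      · simp [h, hdepC]
    rw [h1]
    simp [hc]
  · rw [← List.append_assoc, List.getLast?_concat, List.getLast?_concat]
  · rw [runOK_append]
    exact ⟨hrun, hOK⟩

/-- Running from `prev` through a full station walk and then to the customer `c`. -/
lemma detour_run (P : Instance V) (hsymm : ∀ u v, P.dist u v = P.dist v u)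
    (hdemDep : P.demand P.dep = 0) (hdemVf : ∀ v ∈ P.Vf, P.demand v = 0)
    (hQ : 0 < P.Q) (c : V) (hcdep : c ≠ P.dep)
    {fIn fOut : V} (p : (chargingGraph P hsymm).Walk fIn fOut) (hfIn : fIn ∈ stations P)
    (L : Label) (prev : V)
    (hbreset : (if prev = P.dep ∨ prev ∈ P.Vf then (0:ℝ) else L.2.2) = L.2.2)
    (h0q : 0 ≤ L.2.1) (hqQ : L.2.1 ≤ P.Q) :
    (∀ v ∈ p.support, v ∈ stations P) ∧
    runState P L prev (p.support ++ [c]) =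
      (L.1 + P.dist prev fIn + walkWeight P.dist p + P.dist fOut c,
        (if P.dep ∈ p.support then 0 else L.2.1) + P.demand c,
        P.h * P.dist fOut c) ∧
    (L.2.2 + P.h * P.dist prev fIn ≤ P.B → P.demand c ≤ P.Q →
      (P.dep ∉ p.support → L.2.1 + P.demand c ≤ P.Q) → P.h * P.dist fOut c ≤ P.B →
      runOK P L prev (p.support ++ [c])) := by
  have hdemfIn : P.demand fIn = 0 := by
    rcases mem_stations_iff.1 hfIn with h | h
    · rw [h, hdemDep]
    · exact hdemVf _ h
  have hstep1 : step P L prev fIn =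
      (L.1 + P.dist prev fIn, if fIn = P.dep then 0 else L.2.1,
        L.2.2 + P.h * P.dist prev fIn) := by
    simp only [step, hdemfIn, add_zero, hbreset]
  obtain ⟨hsupp, hrun⟩ := walk_run P hsymm hdemDep hdemVf hQ c hcdep p hfIn
  have hq10 : (0:ℝ) ≤ if fIn = P.dep then 0 else L.2.1 := by
    split_ifs
    · exact le_refl 0
    · exact h0q
  have hq1Q : (if fIn = P.dep then (0:ℝ) else L.2.1) ≤ P.Q := by
    split_ifs
    · exact hQ.le
    · exact hqQ
  obtain ⟨hState, hOKf⟩ := hrun (L.1 + P.dist prev fIn) _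
    (L.2.2 + P.h * P.dist prev fIn) hq10 hq1Q
  have hmem2 : P.dep ∈ p.support ↔ (fIn = P.dep ∨ P.dep ∈ p.support.tail) := by
    conv_lhs => rw [p.support_eq_cons]
    exact List.mem_cons.trans (or_congr_left eq_comm)
  have hifeq : (if P.dep ∈ p.support.tail then (0:ℝ)
        else if fIn = P.dep then 0 else L.2.1)
      = (if P.dep ∈ p.support then 0 else L.2.1) := by
    by_cases h1 : fIn = P.dep <;> by_cases h2 : P.dep ∈ p.support.tail <;>
      simp [hmem2, h1, h2]
  have hcons : p.support ++ [c] = fIn :: (p.support.tail ++ [c]) := by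
    conv_lhs => rw [p.support_eq_cons]
    rw [List.cons_append]
  refine ⟨hsupp, ?_, ?_⟩
  · rw [hcons, runState_cons, hstep1, hState, hifeq]
  · intro hb1 hdc hnd hb2
    rw [hcons, runOK_cons, hstep1]
    refine ⟨hq1Q, hb1, ?_⟩
    apply hOKf hdc _ hb2
    intro hnt
    by_cases h1 : fIn = P.dep
    · rw [if_pos h1, zero_add]; exact hdc
    · rw [if_neg h1]
      apply hnd
      rw [hmem2]
      push_neg
      exact ⟨fun hh => h1 hh, hnt⟩

lemma step_main [Fintype V] (P : Instance V)
    (hsymm : ∀ u v, P.dist u v = P.dist v u) (hnn : ∀ u v, 0 ≤ P.dist u v)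
    (hdem : ∀ v, 0 ≤ P.demand v)
    (hdemDep : P.demand P.dep = 0) (hdemVf : ∀ v ∈ P.Vf, P.demand v = 0)
    (hh : 0 < P.h) (hQ : 0 < P.Q)
    (hdepC : P.dep ∉ P.Vc) (hdepF : P.dep ∉ P.Vf) (hdisj : Disjoint P.Vc P.Vf)
    (prev c : V) (hcVc : c ∈ P.Vc) (hprev : prev = P.dep ∨ prev ∈ P.Vc)
    (L : Label) (h0q : 0 ≤ L.2.1) (hqQ : L.2.1 ≤ P.Q) (h0b : 0 ≤ L.2.2)
    (hLdep : prev = P.dep → L = ((0:ℝ), (0:ℝ), (0:ℝ)))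
    (pre0 rest : List V) (hPD : PartialDecoding P pre0 rest)
    (hrs : runState P (0,0,0) P.dep rest = L)
    (hlastp : rest.getLastD P.dep = prev)
    (L' : Label) (hcand : L' ∈ candidates P hsymm prev c L)
    (S : Set Label) (hsub : candidates P hsymm prev c L ⊆ S)
    (hmin : ∀ y ∈ S, y ≤ L' → L' ≤ y) :
    (0 ≤ L'.2.1 ∧ L'.2.1 ≤ P.Q ∧ 0 ≤ L'.2.2) ∧
    ∃ rest', PartialDecoding P (pre0 ++ [c]) rest' ∧
      runState P (0,0,0) P.dep rest' = L' ∧ rest'.getLastD P.dep = c := by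
  have hcdep : c ≠ P.dep := fun h => hdepC (h ▸ hcVc)
  have hbreset : (if prev = P.dep ∨ prev ∈ P.Vf then (0:ℝ) else L.2.2) = L.2.2 := by
    rcases hprev with h | h
    · rw [if_pos (Or.inl h), hLdep h]
    · rw [if_neg]
      push_neg
      exact ⟨fun hd => hdepC (hd ▸ h), Finset.disjoint_left.1 hdisj h⟩
  rcases hcand with ⟨hEq, hq'Q, hb'B⟩ | ⟨fIn, fOut, hfIn, hfOut, hreach, hbranch⟩
  · -- direct extension
    subst hEq
    simp only [directExt] at hq'Q hb'B ⊢
    have hstep : step P L prev c = directExt P prev c L := by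
      simp only [step, directExt, if_neg hcdep, hbreset]
    constructor
    · exact ⟨add_nonneg h0q (hdem c), hq'Q,
        add_nonneg h0b (mul_nonneg hh.le (hnn _ _))⟩
    refine ⟨rest ++ ([] ++ [c]), ?_, ?_, ?_⟩
    · apply extend_decoding P pre0 rest hPD c hcVc hdepC hdisj [] (by simp)
      rw [hrs, hlastp, List.nil_append, runOK_cons, hstep]
      exact ⟨hq'Q, hb'B, trivial⟩
    · rw [runState_append, hrs, hlastp, List.nil_append, runState_cons, hstep]
      rfl
    · rw [← List.append_assoc]
      exact getLastD_concat c _ _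
  rcases hbranch with ⟨hEq, hne, hq'Q, hb'B⟩ | ⟨hEq, hne1, hne2, hq'Q, hb'B⟩
  · -- charging detour
    subst hEq
    simp only [chargeExt] at hq'Q hb'B ⊢
    obtain ⟨p, hp⟩ := F_attained P hsymm hnn hne
    obtain ⟨hsupp, hState, hOK⟩ :=
      detour_run P hsymm hdemDep hdemVf hQ c hcdep p hfIn L prev hbreset h0q hqQ
    -- if the walk passes through the depot, domination by the depot detour forces q = 0
    have hq0' : P.dep ∈ p.support → L.2.1 = 0 := by
      intro hdp
      have hsplit : walkWeight P.dist (p.takeUntil P.dep hdp)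
          + walkWeight P.dist (p.dropUntil P.dep hdp) = walkWeight P.dist p := by
        rw [← walkWeight_append, Walk.take_spec]
      have hF1 : F P hsymm fIn P.dep ≤ walkWeight P.dist (p.takeUntil P.dep hdp) :=
        F_le P hsymm hnn _
      have hF2 : F P hsymm P.dep fOut ≤ walkWeight P.dist (p.dropUntil P.dep hdp) :=
        F_le P hsymm hnn _
      have hDmem : depotExt P hsymm prev c fIn fOut L ∈ candidates P hsymm prev c L := by
        refine Or.inr ⟨fIn, fOut, hfIn, hfOut, hreach, Or.inr ⟨rfl,
          ⟨p.takeUntil P.dep hdp⟩, ⟨p.dropUntil P.dep hdp⟩, ?_, ?_⟩⟩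
        · simp only [depotExt]
          have := hdem c
          linarith [hq'Q, h0q]
        · simp only [depotExt]
          exact hb'B
      have hle : depotExt P hsymm prev c fIn fOut L ≤ chargeExt P hsymm prev c fIn fOut L := by
        rw [Prod.le_def, Prod.le_def]
        refine ⟨?_, ?_, le_refl _⟩
        · show L.1 + P.dist prev fIn + F P hsymm fIn P.dep + F P hsymm P.dep fOut
              + P.dist fOut c ≤ _
          show _ ≤ L.1 + P.dist prev fIn + F P hsymm fIn fOut + P.dist fOut c
          have : F P hsymm fIn P.dep + F P hsymm P.dep fOut ≤ F P hsymm fIn fOut := by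
            rw [← hp, ← hsplit]
            exact add_le_add hF1 hF2
          linarith
        · show P.demand c ≤ L.2.1 + P.demand c
          linarith
      have hge := hmin _ (hsub hDmem) hle
      have h2 := (Prod.le_def.1 (Prod.le_def.1 hge).2).1
      simp only [chargeExt, depotExt] at h2
      linarith
    constructor
    · exact ⟨add_nonneg h0q (hdem c), hq'Q, mul_nonneg hh.le (hnn _ _)⟩
    have hifL : (if P.dep ∈ p.support then (0:ℝ) else L.2.1) = L.2.1 := by
      by_cases hdp : P.dep ∈ p.support
      · rw [if_pos hdp, hq0' hdp]
      · rw [if_neg hdp]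
    refine ⟨rest ++ (p.support ++ [c]), ?_, ?_, ?_⟩
    · apply extend_decoding P pre0 rest hPD c hcVc hdepC hdisj p.support
        (fun v hv => (mem_stations_iff.1 (hsupp v hv)).symm)
      · rw [hrs, hlastp]
        apply hOK hreach
        · have := h0q; linarith
        · intro _; exact hq'Q
        · exact hb'B
    · rw [runState_append, hrs, hlastp, hState, hifL, hp]
    · rw [← List.append_assoc]
      exact getLastD_concat c _ _
  · -- depot detour
    subst hEq
    simp only [depotExt] at hq'Q hb'B ⊢
    obtain ⟨p1, hp1⟩ := F_attained P hsymm hnn hne1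
    obtain ⟨p2, hp2⟩ := F_attained P hsymm hnn hne2
    set p := p1.append p2 with hpdef
    have hp : walkWeight P.dist p = F P hsymm fIn P.dep + F P hsymm P.dep fOut := by
      rw [hpdef, walkWeight_append, hp1, hp2]
    have hdp : P.dep ∈ p.support := by
      rw [hpdef, Walk.support_append]
      exact List.mem_append.2 (Or.inl p1.end_mem_support)
    obtain ⟨hsupp, hState, hOK⟩ :=
      detour_run P hsymm hdemDep hdemVf hQ c hcdep p hfIn L prev hbreset h0q hqQ
    constructor
    · exact ⟨hdem c, hq'Q, mul_nonneg hh.le (hnn _ _)⟩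
    refine ⟨rest ++ (p.support ++ [c]), ?_, ?_, ?_⟩
    · apply extend_decoding P pre0 rest hPD c hcVc hdepC hdisj p.support
        (fun v hv => (mem_stations_iff.1 (hsupp v hv)).symm)
      · rw [hrs, hlastp]
        apply hOK hreach hq'Q
        · intro h; exact absurd hdp h
        · exact hb'B
    · rw [runState_append, hrs, hlastp, hState, if_pos hdp, hp]
      refine Prod.ext ?_ (Prod.ext ?_ ?_) <;> simp <;> ring
    · rw [← List.append_assoc]
      exact getLastD_concat c _ _

lemma fronts_sound [Fintype V] (P : Instance V)
    (hsymm : ∀ u v, P.dist u v = P.dist v u) (hnn : ∀ u v, 0 ≤ P.dist u v)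
    (hdem : ∀ v, 0 ≤ P.demand v)
    (hdemDep : P.demand P.dep = 0) (hdemVf : ∀ v ∈ P.Vf, P.demand v = 0)
    (hh : 0 < P.h) (hQ : 0 < P.Q)
    (hdepC : P.dep ∉ P.Vc) (hdepF : P.dep ∉ P.Vf) (hdisj : Disjoint P.Vc P.Vf) :
    ∀ (pre : List V) (prev : V) (pre0 : List V) (Fr : Set Label),
      (∀ a ∈ pre, a ∈ P.Vc) →
      (prev = P.dep ∨ prev ∈ P.Vc) →
      (∀ L ∈ Fr, (0 ≤ L.2.1 ∧ L.2.1 ≤ P.Q ∧ 0 ≤ L.2.2) ∧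
        (prev = P.dep → L = ((0:ℝ), (0:ℝ), (0:ℝ))) ∧
        ∃ rest, PartialDecoding P pre0 rest ∧ runState P (0,0,0) P.dep rest = L ∧
          rest.getLastD P.dep = prev) →
      ∀ L ∈ fronts P hsymm prev pre Fr,
        ∃ rest, PartialDecoding P (pre0 ++ pre) rest ∧
          runState P (0,0,0) P.dep rest = L := by
  intro pre
  induction pre with
  | nil =>
      intro prev pre0 Fr hpre hprev hFr L hL
      obtain ⟨-, -, rest, h1, h2, -⟩ := hFr L hL
      exact ⟨rest, by simpa using h1, h2⟩
  | cons c cs ih =>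
      intro prev pre0 Fr hpre hprev hFr L hL
      have hc : c ∈ P.Vc := hpre c List.mem_cons_self
      have hcdep : c ≠ P.dep := fun h => hdepC (h ▸ hc)
      have hfront : ∀ L' ∈ nextFront P hsymm prev c Fr,
          (0 ≤ L'.2.1 ∧ L'.2.1 ≤ P.Q ∧ 0 ≤ L'.2.2) ∧
          (c = P.dep → L' = ((0:ℝ), (0:ℝ), (0:ℝ))) ∧
          ∃ rest', PartialDecoding P (pre0 ++ [c]) rest' ∧
            runState P (0,0,0) P.dep rest' = L' ∧ rest'.getLastD P.dep = c := by
        intro L' hL'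
        obtain ⟨hL'S, hL'min⟩ := hL'
        obtain ⟨L0, hL0Fr, hcand⟩ := hL'S
        obtain ⟨hInv, hdep0, rest, hPD, hrs, hlastp⟩ := hFr L0 hL0Fr
        obtain ⟨hInv', rest', hPD', hrs', hlast'⟩ :=
          step_main P hsymm hnn hdem hdemDep hdemVf hh hQ hdepC hdepF hdisj
            prev c hc hprev L0 hInv.1 hInv.2.1 hInv.2.2 hdep0 pre0 rest hPD hrs hlastp
            L' hcand {L'' | ∃ L1 ∈ Fr, L'' ∈ candidates P hsymm prev c L1}
            (fun y hy => ⟨L0, hL0Fr, hy⟩) hL'min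
        exact ⟨hInv', fun h => absurd h hcdep, rest', hPD', hrs', hlast'⟩
      have hL2 : L ∈ fronts P hsymm c cs (nextFront P hsymm prev c Fr) := hL
      have hmain := ih c (pre0 ++ [c]) (nextFront P hsymm prev c Fr)
        (fun a ha => hpre a (List.mem_cons_of_mem _ ha)) (Or.inr hc) hfront L hL2
      have heq : (pre0 ++ [c]) ++ cs = pre0 ++ (c :: cs) := by simp
      rwa [heq] at hmain

end Aux

/-- Soundness of the FP-FLA fronts: every label in the front obtained after processing a
prefix `pre` of the customer permutation `π` is the exact state of some feasible partial
decoding of `pre`. -/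
theorem stmt11 {V : Type*} [DecidableEq V] [Fintype V] (P : Instance V)
    (hsymm : ∀ u v, P.dist u v = P.dist v u) (hnn : ∀ u v, 0 ≤ P.dist u v)
    (hdem : ∀ v, 0 ≤ P.demand v) (hdemDep : P.demand P.dep = 0)
    (hdemVf : ∀ v ∈ P.Vf, P.demand v = 0)
    (hh : 0 < P.h) (hB : 0 < P.B) (hQ : 0 < P.Q)
    (hdepC : P.dep ∉ P.Vc) (hdepF : P.dep ∉ P.Vf) (hdisj : Disjoint P.Vc P.Vf)
    (π : List V) (hnd : π.Nodup) (hcust : ∀ c, c ∈ π ↔ c ∈ P.Vc) :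
    ∀ pre suf : List V, π = pre ++ suf →
      ∀ L ∈ fronts P hsymm P.dep pre initFront,
        ∃ rest : List V, PartialDecoding P pre rest ∧
          runState P (0, 0, 0) P.dep rest = L := by
  intro pre suf hps L hL
  have hpre : ∀ a ∈ pre, a ∈ P.Vc := fun a ha =>
    (hcust a).1 (hps ▸ List.mem_append_left suf ha)
  have hFr : ∀ L ∈ initFront, (0 ≤ L.2.1 ∧ L.2.1 ≤ P.Q ∧ 0 ≤ L.2.2) ∧
      (P.dep = P.dep → L = ((0:ℝ), (0:ℝ), (0:ℝ))) ∧
      ∃ rest, PartialDecoding P [] rest ∧ runState P (0,0,0) P.dep rest = L ∧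
        rest.getLastD P.dep = P.dep := by
    intro L hL
    have hL0 : L = ((0:ℝ), (0:ℝ), (0:ℝ)) := Set.mem_singleton_iff.1 hL
    subst hL0
    refine ⟨⟨le_refl 0, hQ.le, le_refl 0⟩, fun _ => rfl, [], ?_, rfl, rfl⟩
    exact ⟨fun v hv => absurd hv List.not_mem_nil, rfl, rfl, trivial⟩
  have h := fronts_sound P hsymm hnn hdem hdemDep hdemVf hh hQ hdepC hdepF hdisj
    pre P.dep [] initFront hpre (Or.inl rfl) hFr L hL
  simpa using h

end FPSCP
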